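/- arXiv:1511.06385 — 3 statements merged into one kernel-verified Lean document; each statement's English description precedes it below -/
import Mathlib

section
/- Let n ≥ 1, let g ∈ ℝⁿ, and let σ > 0. Suppose there is an index i₀ such that |gⱼ| < |g_{i₀}| for every j ≠ i₀ (the maximal-magnitude coordinate is unique and nonzero). For p ∈ (1, ∞) with dual exponent q = p/(p-1), let ε(p) ∈ ℝⁿ be defined by ε(p)ᵢ = σ · sign(gᵢ) · (|gᵢ| / ‖g‖_q)^{1/(p-1)}. Then as p → 1⁺, ε(p)_{i₀} converges to σ · sign(g_{i₀}) and ε(p)ⱼ converges to 0 for every j ≠ i₀. That is, in the limit p → 1 the optimal gradient perturbation concentrates its entire budget σ on the coordinate of largest absolute gradient. -/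
/-!
Write `q = p / (p - 1)`, so that `q → ∞` as `p → 1⁺` and the exponent `1 / (p - 1)` equals
`q - 1`. Normalising by `M = |g i₀|`, `‖g‖_q = M · S(q)^(1/q)` with
`S(q) = ∑ₖ (|gₖ| / M)^q → 1`, because every ratio except the one at `i₀` is below `1`. Hence
`(|gᵢ| / ‖g‖_q)^(q-1) = (|gᵢ| / M)^(q-1) / S(q)^((q-1)/q)`, whose numerator tends to `1` at `i₀`
and to `0` elsewhere, while the denominator tends to `1`.
-/

open Finset Filter Topology

section
variable {ι : Type*} [Fintype ι]

lemma tendsto_sum_rpow_atTop_of_lt_one {r : ι → ℝ} {i₀ : ι} (h0 : ∀ k, 0 ≤ r k)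
    (h1 : r i₀ = 1) (hlt : ∀ k, k ≠ i₀ → r k < 1) :
    Tendsto (fun q : ℝ => ∑ k, r k ^ q) atTop (𝓝 1) := by
  classical
  have hterm : ∀ k, Tendsto (fun q : ℝ => r k ^ q) atTop (𝓝 (if k = i₀ then 1 else 0)) := by
    intro k
    by_cases hk : k = i₀
    · simp [hk, h1]
    · rw [if_neg hk]
      exact tendsto_rpow_atTop_of_base_lt_one _ (by linarith [h0 k]) (hlt k hk)
  simpa using tendsto_finsetSum univ fun k _ => hterm k

lemma div_sum_rpow_rpow_eq (g : ι → ℝ) (i : ι) {M q : ℝ} (hM : 0 < M) (hq : q ≠ 0) :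
    (|g i| / (∑ k, |g k| ^ q) ^ (1 / q)) ^ (q - 1) =
      (|g i| / M) ^ (q - 1) / (∑ k, (|g k| / M) ^ q) ^ ((q - 1) / q) := by
  set S := ∑ k, (|g k| / M) ^ q
  have hS : 0 ≤ S := sum_nonneg fun k _ => by positivity
  have hsum : ∑ k, |g k| ^ q = M ^ q * S := by
    rw [mul_sum]
    refine sum_congr rfl fun k _ => ?_
    rw [Real.div_rpow (abs_nonneg _) hM.le, mul_div_cancel₀ _ (by positivity)]
  rw [hsum, Real.mul_rpow (by positivity) hS, ← Real.rpow_mul hM.le, mul_one_div_cancel hq,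
    Real.rpow_one, ← div_div, div_eq_mul_inv _ (S ^ _),
    Real.mul_rpow (by positivity) (by positivity), Real.inv_rpow (by positivity),
    ← Real.rpow_mul hS, one_div_mul_eq_div, div_eq_mul_inv _ (S ^ _)]

theorem tendsto_div_sum_rpow_rpow_sub_one [DecidableEq ι] {g : ι → ℝ} {i₀ : ι}
    (hmax : ∀ j, j ≠ i₀ → |g j| < |g i₀|) (hg : g i₀ ≠ 0) (i : ι) :
    Tendsto (fun q : ℝ => (|g i| / (∑ k, |g k| ^ q) ^ (1 / q)) ^ (q - 1)) atTop
      (𝓝 (if i = i₀ then 1 else 0)) := by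
  have hM : 0 < |g i₀| := abs_pos.mpr hg
  have hratio : Tendsto (fun q : ℝ => (|g i| / |g i₀|) ^ (q - 1)) atTop
      (𝓝 (if i = i₀ then 1 else 0)) := by
    by_cases hi : i = i₀
    · simp [hi, div_self hM.ne']
    · have hnonneg : 0 ≤ |g i| / |g i₀| := by positivity
      rw [if_neg hi]
      exact (tendsto_rpow_atTop_of_base_lt_one _ (by linarith)
        ((div_lt_one hM).mpr (hmax i hi))).comp (tendsto_atTop_add_const_right _ (-1) tendsto_id)
  have hsum : Tendsto (fun q : ℝ => ∑ k, (|g k| / |g i₀|) ^ q) atTop (𝓝 1) :=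
    tendsto_sum_rpow_atTop_of_lt_one (fun k => by positivity) (div_self hM.ne')
      fun k hk => (div_lt_one hM).mpr (hmax k hk)
  have hexp : Tendsto (fun q : ℝ => (q - 1) / q) atTop (𝓝 1) := by
    have h := (tendsto_inv_atTop_zero (𝕜 := ℝ)).const_sub 1
    rw [sub_zero] at h
    refine h.congr' ?_
    filter_upwards [eventually_gt_atTop 0] with q hq
    field_simp
  have hnorm := hsum.rpow hexp (Or.inl one_ne_zero)
  rw [Real.one_rpow] at hnorm
  have hlim := hratio.div hnorm one_ne_zero
  rw [div_one] at hlim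
  refine hlim.congr' ?_
  filter_upwards [eventually_gt_atTop 0] with q hq
  rw [Pi.div_apply, div_sum_rpow_rpow_eq g i hM hq.ne']

end

lemma tendsto_div_sub_one_nhdsGT_one :
    Tendsto (fun p : ℝ => p / (p - 1)) (𝓝[>] 1) atTop := by
  have hsub : Tendsto (fun p : ℝ => p - 1) (𝓝[>] 1) (𝓝[>] 0) := by
    refine tendsto_nhdsWithin_of_tendsto_nhds_of_eventually_within _ ?_ ?_
    · simpa using ((tendsto_id (x := 𝓝 (1 : ℝ))).sub_const 1).mono_left nhdsWithin_le_nhds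
    · filter_upwards [self_mem_nhdsWithin] with p (hp : 1 < p)
      exact sub_pos.mpr hp
  refine (tendsto_atTop_add_const_left _ 1 (tendsto_inv_nhdsGT_zero.comp hsub)).congr' ?_
  filter_upwards [self_mem_nhdsWithin] with p (hp : 1 < p)
  have : p - 1 ≠ 0 := sub_ne_zero.mpr hp.ne'
  simp only [Function.comp_apply]
  field_simp
  ring

theorem perturbation_tendsto_budget_concentration_general (n : ℕ)
    (g : Fin n → ℝ) (σ : ℝ) (i₀ : Fin n)
    (hmax : ∀ j, j ≠ i₀ → |g j| < |g i₀|) (hg : g i₀ ≠ 0) :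
    Tendsto (fun p : ℝ =>
        σ * Real.sign (g i₀) *
          (|g i₀| / (∑ j, |g j| ^ (p / (p - 1))) ^ (1 / (p / (p - 1)))) ^ (1 / (p - 1)))
      (nhdsWithin 1 (Set.Ioi 1)) (nhds (σ * Real.sign (g i₀))) ∧
    (∀ j, j ≠ i₀ →
      Tendsto (fun p : ℝ =>
          σ * Real.sign (g j) *
            (|g j| / (∑ k, |g k| ^ (p / (p - 1))) ^ (1 / (p / (p - 1)))) ^ (1 / (p - 1)))
        (nhdsWithin 1 (Set.Ioi 1)) (nhds 0)) := by
  have hcoord : ∀ i, Tendsto (fun p : ℝ =>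
      (|g i| / (∑ k, |g k| ^ (p / (p - 1))) ^ (1 / (p / (p - 1)))) ^ (1 / (p - 1)))
      (𝓝[>] 1) (𝓝 (if i = i₀ then 1 else 0)) := by
    intro i
    refine ((tendsto_div_sum_rpow_rpow_sub_one hmax hg i).comp
      tendsto_div_sub_one_nhdsGT_one).congr' ?_
    filter_upwards [self_mem_nhdsWithin] with p (hp : 1 < p)
    have : p - 1 ≠ 0 := sub_ne_zero.mpr hp.ne'
    simp only [Function.comp_apply]
    congr 1
    field_simp
    ring
  refine ⟨by simpa using (hcoord i₀).const_mul (σ * Real.sign (g i₀)), fun j hj => ?_⟩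
  simpa [hj] using (hcoord j).const_mul (σ * Real.sign (g j))

/-- As `p → 1⁺`, the optimal gradient perturbation
`ε(p) i = σ * sign (g i) * (|g i| / ‖g‖_{p/(p-1)})^(1/(p-1))` concentrates its
entire budget `σ` on the unique coordinate `i₀` of largest absolute gradient:
`ε(p) i₀ → σ * sign (g i₀)` and `ε(p) j → 0` for all `j ≠ i₀`. -/
theorem perturbation_tendsto_budget_concentration (n : ℕ) (hn : 1 ≤ n)
    (g : Fin n → ℝ) (σ : ℝ) (hσ : 0 < σ) (i₀ : Fin n)
    (hmax : ∀ j, j ≠ i₀ → |g j| < |g i₀|) (hg : g i₀ ≠ 0) :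
    Tendsto (fun p : ℝ =>
        σ * Real.sign (g i₀) *
          (|g i₀| / (∑ j, |g j| ^ (p / (p - 1))) ^ (1 / (p / (p - 1)))) ^ (1 / (p - 1)))
      (nhdsWithin 1 (Set.Ioi 1)) (nhds (σ * Real.sign (g i₀))) ∧
    (∀ j, j ≠ i₀ →
      Tendsto (fun p : ℝ =>
          σ * Real.sign (g j) *
            (|g j| / (∑ k, |g k| ^ (p / (p - 1))) ^ (1 / (p / (p - 1)))) ^ (1 / (p - 1)))
        (nhdsWithin 1 (Set.Ioi 1)) (nhds 0)) :=
  perturbation_tendsto_budget_concentration_general n g σ i₀ hmax hg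
end

section
/- Fix N, m ≥ 1 and an index l ∈ {1, …, N}. Let F : ℝᵐ → ℝᴺ be differentiable at a point x with F(x)_l > 0, and let f : ℝᴺ → ℝ be the cross-entropy loss f(y) = -log(y_l) with one-hot target at class l. Let J denote the Jacobian matrix of F at x (the m×N matrix whose (a,i) entry is ∂Fᵢ/∂x_a, arranged so that ∇_x(f∘F) = J · ∇_y f(F(x))), let g = ∇_x(f∘F)(x) ∈ ℝᵐ be the gradient of the composite loss with respect to the input, and let H = H_f(F(x)) be the N×N Hessian of f at F(x). Then g · gᵀ = J · H · Jᵀ as m×m matrices: the outer product of the input gradient of the cross-entropy loss equals the Gauss–Newton matrix. -/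
/-!
For the cross-entropy loss `f y = -log (y l)`, the gradient at `c` is `-(c l)⁻¹ eₗ` and the
Hessian is `(c l)⁻² eₗ eₗᵀ`, i.e. the Hessian is the outer product `d dᵀ` of the gradient `d`
(because `(-log)'' = ((-log)')²`). By the chain rule the input gradient is `g = J d`, so
`J H Jᵀ = (J d)(J d)ᵀ = g gᵀ`.
-/

open Matrix ContinuousLinearMap

theorem Matrix.mul_vecMulVec_mul_transpose {α l m n o : Type*} [CommSemiring α] [Fintype m]
    [Fintype n] (A : Matrix l m α) (u : m → α) (v : n → α) (B : Matrix o n α) :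
    A * vecMulVec u v * Bᵀ = vecMulVec (A *ᵥ u) (B *ᵥ v) := by
  rw [mul_vecMulVec, vecMulVec_mul, vecMul_transpose]

theorem ContinuousLinearMap.apply_eq_sum_mul_apply_single {𝕜 ι : Type*}
    [NontriviallyNormedField 𝕜] [Fintype ι] [DecidableEq ι] (φ : (ι → 𝕜) →L[𝕜] 𝕜) (w : ι → 𝕜) :
    φ w = ∑ i, w i * φ (Pi.single i 1) := by
  conv_lhs => rw [← Finset.univ_sum_single w]
  simp only [map_sum]
  refine Finset.sum_congr rfl fun i _ => ?_
  rw [← smul_eq_mul, ← map_smul, ← Pi.single_smul', smul_eq_mul, mul_one]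

theorem fderiv_comp_apply_eq_sum {𝕜 E ι : Type*} [NontriviallyNormedField 𝕜]
    [NormedAddCommGroup E] [NormedSpace 𝕜 E] [Fintype ι] [DecidableEq ι] {F : E → ι → 𝕜}
    {f : (ι → 𝕜) → 𝕜} {x : E} (hF : DifferentiableAt 𝕜 F x) (hf : DifferentiableAt 𝕜 f (F x))
    (v : E) :
    fderiv 𝕜 (fun z => f (F z)) x v =
      ∑ i, fderiv 𝕜 (fun z => F z i) x v * fderiv 𝕜 f (F x) (Pi.single i 1) := by
  rw [fderiv_fun_comp x hf hF, ContinuousLinearMap.comp_apply,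
    apply_eq_sum_mul_apply_single]
  simp only [fderiv_apply hF, ContinuousLinearMap.comp_apply, proj_apply]

section NegLog

variable {ι : Type*} [Fintype ι] (l : ι)

theorem hasFDerivAt_neg_log_apply {y : ι → ℝ} (hy : y l ≠ 0) :
    HasFDerivAt (fun y : ι → ℝ => -Real.log (y l))
      (-(y l)⁻¹ • (proj l : (ι → ℝ) →L[ℝ] ℝ)) y := by
  have h := ((Real.hasDerivAt_log hy).comp_hasFDerivAt y (hasFDerivAt_apply (𝕜 := ℝ) l y)).neg
  rwa [← neg_smul] at h

theorem fderiv_neg_log_apply_eventuallyEq {c : ι → ℝ} (hc : c l ≠ 0) :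
    fderiv ℝ (fun y : ι → ℝ => -Real.log (y l)) =ᶠ[nhds c]
      fun y => -(y l)⁻¹ • (proj l : (ι → ℝ) →L[ℝ] ℝ) := by
  filter_upwards [(isOpen_ne_fun (continuous_apply l) continuous_const).mem_nhds hc] with y hy
  exact (hasFDerivAt_neg_log_apply l hy).fderiv

theorem hasFDerivAt_fderiv_neg_log_apply {c : ι → ℝ} (hc : c l ≠ 0) :
    HasFDerivAt (fderiv ℝ (fun y : ι → ℝ => -Real.log (y l)))
      ((((c l) ^ 2)⁻¹ • (proj l : (ι → ℝ) →L[ℝ] ℝ)).smulRight (proj l)) c := by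
  have hinv : HasFDerivAt (fun y : ι → ℝ => -(y l)⁻¹)
      (((c l) ^ 2)⁻¹ • (proj l : (ι → ℝ) →L[ℝ] ℝ)) c := by
    have h := ((hasDerivAt_inv hc).comp_hasFDerivAt c (hasFDerivAt_apply (𝕜 := ℝ) l c)).neg
    rwa [← neg_smul, neg_neg] at h
  exact (hinv.smul_const _).congr_of_eventuallyEq (fderiv_neg_log_apply_eventuallyEq l hc)

theorem iteratedFDeriv_two_neg_log_apply {c : ι → ℝ} (hc : c l ≠ 0) (u v : ι → ℝ) :
    iteratedFDeriv ℝ 2 (fun y : ι → ℝ => -Real.log (y l)) c ![u, v] =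
      fderiv ℝ (fun y : ι → ℝ => -Real.log (y l)) c u *
        fderiv ℝ (fun y : ι → ℝ => -Real.log (y l)) c v := by
  rw [iteratedFDeriv_two_apply, (hasFDerivAt_fderiv_neg_log_apply l hc).fderiv,
    (hasFDerivAt_neg_log_apply l hc).fderiv]
  simp only [Fin.isValue, cons_val_zero, cons_val_one, cons_val_fin_one, smulRight_apply,
    _root_.smul_apply, proj_apply, smul_eq_mul, neg_mul, mul_neg, neg_neg]
  ring

end NegLog

theorem gradient_outer_eq_gaussNewton_general (N m : ℕ)
    (l : Fin N) (F : (Fin m → ℝ) → (Fin N → ℝ)) (x : Fin m → ℝ)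
    (hF : DifferentiableAt ℝ F x) (hFx : 0 < F x l)
    (f : (Fin N → ℝ) → ℝ) (hf : ∀ y, f y = -Real.log (y l))
    (J : Matrix (Fin m) (Fin N) ℝ)
    (hJ : ∀ a i, J a i = fderiv ℝ (fun z => F z i) x (Pi.single a 1))
    (g : Fin m → ℝ)
    (hg : ∀ a, g a = fderiv ℝ (fun z => f (F z)) x (Pi.single a 1))
    (H : Matrix (Fin N) (Fin N) ℝ)
    (hH : ∀ i j, H i j = iteratedFDeriv ℝ 2 f (F x) ![Pi.single i 1, Pi.single j 1]) :
    vecMulVec g g = J * H * Jᵀ := by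
  obtain rfl : f = fun y => -Real.log (y l) := funext hf
  set d : Fin N → ℝ := fun i =>
    fderiv ℝ (fun y : Fin N → ℝ => -Real.log (y l)) (F x) (Pi.single i 1)
  have hHd : H = vecMulVec d d := by
    ext i j
    rw [hH, iteratedFDeriv_two_neg_log_apply l hFx.ne']
    rfl
  have hgd : g = J *ᵥ d := by
    ext a
    rw [hg, fderiv_comp_apply_eq_sum hF (hasFDerivAt_neg_log_apply l hFx.ne').differentiableAt]
    simp only [mulVec, dotProduct, hJ, d]
  rw [hHd, hgd, mul_vecMulVec_mul_transpose]

/-- Gauss–Newton identity for the cross-entropy loss: if `F : ℝᵐ → ℝᴺ` is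
differentiable at `x` with `F x l > 0`, `f y = -log (y l)` is the cross-entropy
loss with one-hot target at class `l`, `J` is the Jacobian of `F` at `x`
(arranged as an `m × N` matrix with `J a i = ∂Fᵢ/∂x_a`), `g = ∇_x (f ∘ F)(x)`
is the input gradient and `H = H_f(F x)` is the Hessian of `f` at `F x`, then
`g gᵀ = J H Jᵀ` as `m × m` matrices. -/
theorem gradient_outer_eq_gaussNewton (N m : ℕ) (hN : 1 ≤ N) (hm : 1 ≤ m)
    (l : Fin N) (F : (Fin m → ℝ) → (Fin N → ℝ)) (x : Fin m → ℝ)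
    (hF : DifferentiableAt ℝ F x) (hFx : 0 < F x l)
    (f : (Fin N → ℝ) → ℝ) (hf : ∀ y, f y = -Real.log (y l))
    (J : Matrix (Fin m) (Fin N) ℝ)
    (hJ : ∀ a i, J a i = fderiv ℝ (fun z => F z i) x (Pi.single a 1))
    (g : Fin m → ℝ)
    (hg : ∀ a, g a = fderiv ℝ (fun z => f (F z)) x (Pi.single a 1))
    (H : Matrix (Fin N) (Fin N) ℝ)
    (hH : ∀ i j, H i j = iteratedFDeriv ℝ 2 f (F x) ![Pi.single i 1, Pi.single j 1]) :
    vecMulVec g g = J * H * Jᵀ :=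
  gradient_outer_eq_gaussNewton_general N m l F x hF hFx f hf J hJ g hg H hH
end

section
/- Let d ≥ 1, n ≥ 1, and s > 0, and set σ² = s²/d. Let μ be the product measure on ℝ^d whose coordinates are i.i.d. gaussianReal 0 σ² (the law of η ~ N(0, σ²I_d)), and let e₁, …, eₙ ∈ ℝ^d be unit vectors. Then the probability that the Gaussian noise produces an adversarial example at perturbation scale s satisfies μ{x : ∃ i, ⟨x, eᵢ⟩ ≥ s} ≤ n · exp(-d/2). Hence, when the per-coordinate noise variance matches the mean distortion s²/d of adversarial examples of length s, the probability that isotropic Gaussian noise crosses any of the n adversarial decision thresholds is at most n·e^{-d/2}, which for fixed n decays exponentially in the input dimension d. -/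
/-!
Each `⟨η, eᵢ⟩ = ∑ⱼ eᵢⱼ ηⱼ` is a sum of independent centred Gaussians, hence sub-Gaussian with
variance proxy `σ² ∑ⱼ eᵢⱼ² = σ²`. The Chernoff bound gives `P(⟨η, eᵢ⟩ ≥ s) ≤ exp (-s² / (2σ²))`,
which is `exp (-d/2)` for `σ² = s²/d`, and a union bound over the `n` directions finishes.
-/

open Finset MeasureTheory ProbabilityTheory
open scoped NNReal

lemma hasSubgaussianMGF_id_gaussianReal (v : ℝ≥0) :
    HasSubgaussianMGF id v (gaussianReal 0 v) where
  integrable_exp_mul := integrable_exp_mul_gaussianReal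
  mgf_le t := by simp [mgf_id_gaussianReal]

section PiGaussian

variable {ι : Type*} [Fintype ι]

lemma hasSubgaussianMGF_pi_gaussianReal_eval (v : ι → ℝ≥0) (j : ι) :
    HasSubgaussianMGF (fun x : ι → ℝ ↦ x j) (v j) (Measure.pi fun j ↦ gaussianReal 0 (v j)) :=
  .of_map (X := id) (measurable_pi_apply j).aemeasurable <| by
    rw [(measurePreserving_eval _ j).map_eq]
    exact hasSubgaussianMGF_id_gaussianReal (v j)

lemma hasSubgaussianMGF_sum_mul_pi_gaussianReal (v : ι → ℝ≥0) (a : ι → ℝ) :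
    HasSubgaussianMGF (fun x : ι → ℝ ↦ ∑ j, a j * x j) (∑ j, ‖a j‖₊ ^ 2 * v j)
      (Measure.pi fun j ↦ gaussianReal 0 (v j)) :=
  HasSubgaussianMGF.sum_of_iIndepFun
    (iIndepFun_pi fun j ↦ (measurable_const_mul (a j)).aemeasurable) fun j _ ↦ by
      convert (hasSubgaussianMGF_pi_gaussianReal_eval v j).const_mul (a j) using 2
      ext; exact congrArg (· * (v j : ℝ)) (sq_abs (a j))

lemma measureReal_le_sum_mul_pi_gaussianReal_le (v : ℝ≥0) {a : ι → ℝ}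
    (ha : ∑ j, a j ^ 2 = 1) {ε : ℝ} (hε : 0 ≤ ε) :
    (Measure.pi fun _ : ι ↦ gaussianReal 0 v).real {x | ε ≤ ∑ j, a j * x j} ≤
      Real.exp (-ε ^ 2 / (2 * v)) := by
  simpa [← Finset.sum_mul, ha] using
    (hasSubgaussianMGF_sum_mul_pi_gaussianReal (fun _ ↦ v) a).measure_ge_le hε

end PiGaussian

theorem gaussian_adversarial_prob_exponentially_small_general (d n : ℕ)
    (s : NNReal) (hs : 0 < s)
    (μ : Measure (Fin d → ℝ))
    (hμ : μ = Measure.pi fun _ : Fin d => gaussianReal 0 (s ^ 2 / d))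
    (e : Fin n → Fin d → ℝ) (he : ∀ i, ∑ j, e i j ^ 2 = 1) :
    μ {x | ∃ i, (s : ℝ) ≤ ∑ j, e i j * x j} ≤
      n * ENNReal.ofReal (Real.exp (-(d : ℝ) / 2)) := by
  have hs₀ : (s : ℝ) ≠ 0 := by positivity
  have h_exponent : -(s : ℝ) ^ 2 / (2 * ((s ^ 2 / d : ℝ≥0) : ℝ)) = -(d : ℝ) / 2 := by
    push_cast
    rw [← mul_div_assoc, div_div_eq_mul_div]
    field_simp
  have h_single (i : Fin n) :
      μ {x | (s : ℝ) ≤ ∑ j, e i j * x j} ≤ ENNReal.ofReal (Real.exp (-(d : ℝ) / 2)) := by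
    rw [hμ, ← ofReal_measureReal, ← h_exponent]
    exact ENNReal.ofReal_le_ofReal
      (measureReal_le_sum_mul_pi_gaussianReal_le _ (he i) s.coe_nonneg)
  calc μ {x | ∃ i, (s : ℝ) ≤ ∑ j, e i j * x j}
      = μ (⋃ i, {x | (s : ℝ) ≤ ∑ j, e i j * x j}) := by rw [Set.ofPred_exists]
    _ ≤ ∑ i, μ {x | (s : ℝ) ≤ ∑ j, e i j * x j} := measure_iUnion_fintype_le _ _
    _ ≤ ∑ _i : Fin n, ENNReal.ofReal (Real.exp (-(d : ℝ) / 2)) := sum_le_sum fun i _ ↦ h_single i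
    _ = n * ENNReal.ofReal (Real.exp (-(d : ℝ) / 2)) := by simp

/-- When the per-coordinate noise variance is `σ² = s²/d`, matching the mean
distortion of adversarial examples of length `s`, the probability that an
isotropic Gaussian perturbation `η ~ N(0, σ²I_d)` crosses any of the `n`
adversarial decision thresholds is at most `n · exp (-d/2)`. -/
theorem gaussian_adversarial_prob_exponentially_small (d n : ℕ)
    (hd : 1 ≤ d) (hn : 1 ≤ n) (s : NNReal) (hs : 0 < s)
    (μ : Measure (Fin d → ℝ))
    (hμ : μ = Measure.pi fun _ : Fin d => gaussianReal 0 (s ^ 2 / d))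
    (e : Fin n → Fin d → ℝ) (he : ∀ i, ∑ j, e i j ^ 2 = 1) :
    μ {x | ∃ i, (s : ℝ) ≤ ∑ j, e i j * x j} ≤
      n * ENNReal.ofReal (Real.exp (-(d : ℝ) / 2)) :=
  gaussian_adversarial_prob_exponentially_small_general d n s hs μ hμ e he
end
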